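/- Soundness of the Reluplex calculus, satisfiable case: if φ is a conjunction of linear atoms and ReLU atoms and there exists a witness from φ (a Reluplex derivation from the initial configuration of φ ending in a derivation tree with at least one SAT leaf), then φ is satisfiable; moreover, the assignment α of any node to which the ReluSuccess rule was applied satisfies every atom of φ. -/

import Mathlib

open scoped Classical

/-- A (non-distinguished) Reluplex configuration over the variable set `V`:
basic variables, tableau coefficients, lower/upper bounds (possibly infinite),
current assignment, and the set of ReLU pairs. -/
structure Config (V : Type*) where
  basic : Finset V
  T : V → V → ℝ
  l : V → EReal
  u : V → EReal
  α : V → ℝ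
  R : Finset (V × V)

namespace Config

variable {V : Type*} [Fintype V] [DecidableEq V]

/-- The right-hand side `Σ_{j ∉ basic} T i j * β j` of the tableau row of `i`. -/
noncomputable def rowSum (c : Config V) (i : V) (β : V → ℝ) : ℝ :=
  ∑ j ∈ Finset.univ.filter (fun j => j ∉ c.basic), c.T i j * β j

/-- An assignment `β` satisfies all equations of the tableau of `c`. -/
def SatTab (c : Config V) (β : V → ℝ) : Prop :=
  ∀ i ∈ c.basic, β i = c.rowSum i β

/-- An assignment `β` respects all the lower and upper bounds of `c`. -/
def InBounds (c : Config V) (β : V → ℝ) : Prop :=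
  ∀ x, c.l x ≤ (β x : EReal) ∧ (β x : EReal) ≤ c.u x

/-- `slack⁺(x_i)`. -/
def slackPos (c : Config V) (i : V) : Set V :=
  { j | j ∉ c.basic ∧
      ((0 < c.T i j ∧ (c.α j : EReal) < c.u j) ∨ (c.T i j < 0 ∧ c.l j < (c.α j : EReal))) }

/-- `slack⁻(x_i)`. -/
def slackNeg (c : Config V) (i : V) : Set V :=
  { j | j ∉ c.basic ∧
      ((c.T i j < 0 ∧ (c.α j : EReal) < c.u j) ∨ (0 < c.T i j ∧ c.l j < (c.α j : EReal))) }

/-- The `pivot(T,i,j)` operation: `x_i` leaves the basis and `x_j` enters it;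
the row of `x_i` is solved for `x_j`, and the result is substituted for `x_j`
in all other rows. -/
noncomputable def pivotConfig (c : Config V) (i j : V) : Config V :=
  { c with
    basic := insert j (c.basic.erase i)
    T := fun r k =>
      if r = j then (if k = i then 1 / c.T i j else - (c.T i k / c.T i j))
      else (if k = i then c.T r j / c.T i j
            else c.T r k - c.T r j * c.T i k / c.T i j) }

/-- The `update(α, x_j, δ)` operation for a non-basic variable `x_j`. -/
noncomputable def updateConfig (c : Config V) (j : V) (δ : ℝ) : Config V :=
  { c with
    α := fun k =>
      if k = j then c.α k + δ
      else if k ∈ c.basic then c.α k + δ * c.T k j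
      else c.α k }

/-- The candidate tighter lower bound `Σ_{T i j>0} T i j * l j + Σ_{T i j<0} T i j * u j`. -/
noncomputable def derivedLower (c : Config V) (i : V) : EReal :=
  (∑ j ∈ Finset.univ.filter (fun j => j ∉ c.basic ∧ 0 < c.T i j),
      (c.T i j : EReal) * c.l j)
  + ∑ j ∈ Finset.univ.filter (fun j => j ∉ c.basic ∧ c.T i j < 0),
      (c.T i j : EReal) * c.u j

/-- The candidate tighter upper bound `Σ_{T i j>0} T i j * u j + Σ_{T i j<0} T i j * l j`. -/
noncomputable def derivedUpper (c : Config V) (i : V) : EReal :=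
  (∑ j ∈ Finset.univ.filter (fun j => j ∉ c.basic ∧ 0 < c.T i j),
      (c.T i j : EReal) * c.u j)
  + ∑ j ∈ Finset.univ.filter (fun j => j ∉ c.basic ∧ c.T i j < 0),
      (c.T i j : EReal) * c.l j

end Config

/-- A Reluplex configuration: either one of the distinguished symbols `SAT`, `UNSAT`,
or a tuple `⟨B, T, l, u, α, R⟩`. -/
inductive RConfig (V : Type*) where
  | SAT : RConfig V
  | UNSAT : RConfig V
  | node : Config V → RConfig V

/-- One application of a Reluplex derivation rule to the configuration `c`,
producing the given list of child configurations. -/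
inductive Step {V : Type*} [Fintype V] [DecidableEq V] :
    Config V → List (RConfig V) → Prop
  | pivot1 (c : Config V) (i j : V) (hi : i ∈ c.basic)
      (hlo : (c.α i : EReal) < c.l i) (hj : j ∈ c.slackPos i) :
      Step c [RConfig.node (c.pivotConfig i j)]
  | pivot2 (c : Config V) (i j : V) (hi : i ∈ c.basic)
      (hhi : c.u i < (c.α i : EReal)) (hj : j ∈ c.slackNeg i) :
      Step c [RConfig.node (c.pivotConfig i j)]
  | update (c : Config V) (j : V) (δ : ℝ) (hj : j ∉ c.basic)
      (hviol : (c.α j : EReal) < c.l j ∨ c.u j < (c.α j : EReal))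
      (hlo : c.l j ≤ ((c.α j + δ : ℝ) : EReal))
      (hhi : ((c.α j + δ : ℝ) : EReal) ≤ c.u j) :
      Step c [RConfig.node (c.updateConfig j δ)]
  | failure (c : Config V) (i : V) (hi : i ∈ c.basic)
      (h : ((c.α i : EReal) < c.l i ∧ c.slackPos i = ∅) ∨
           (c.u i < (c.α i : EReal) ∧ c.slackNeg i = ∅)) :
      Step c [RConfig.UNSAT]
  | updateB (c : Config V) (i j : V) (hR : (i, j) ∈ c.R) (hi : i ∉ c.basic)
      (hne : c.α j ≠ max 0 (c.α i)) (hpos : 0 ≤ c.α j) :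
      Step c [RConfig.node (c.updateConfig i (c.α j - c.α i))]
  | updateF (c : Config V) (i j : V) (hR : (i, j) ∈ c.R) (hj : j ∉ c.basic)
      (hne : c.α j ≠ max 0 (c.α i)) :
      Step c [RConfig.node (c.updateConfig j (max 0 (c.α i) - c.α j))]
  | pivotForRelu (c : Config V) (i j : V) (hi : i ∈ c.basic)
      (hrel : ∃ x, (i, x) ∈ c.R ∨ (x, i) ∈ c.R) (hj : j ∉ c.basic)
      (hT : c.T i j ≠ 0) :
      Step c [RConfig.node (c.pivotConfig i j)]
  | reluSplit (c : Config V) (i j : V) (hR : (i, j) ∈ c.R)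
      (hl : c.l i < 0) (hu : 0 < c.u i) :
      Step c [RConfig.node { c with u := fun k => if k = i then 0 else c.u k },
              RConfig.node { c with l := fun k => if k = i then 0 else c.l k }]
  | reluSuccess (c : Config V) (hb : c.InBounds c.α)
      (hr : ∀ p ∈ c.R, c.α p.2 = max 0 (c.α p.1)) :
      Step c [RConfig.SAT]
  | deriveLowerBound (c : Config V) (i : V) (hi : i ∈ c.basic)
      (h : c.l i < c.derivedLower i) :
      Step c [RConfig.node { c with l := fun k => if k = i then c.derivedLower i else c.l k }]
  | deriveUpperBound (c : Config V) (i : V) (hi : i ∈ c.basic)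
      (h : c.derivedUpper i < c.u i) :
      Step c [RConfig.node { c with u := fun k => if k = i then c.derivedUpper i else c.u k }]

/-- Derivation trees: trees of Reluplex configurations. -/
inductive DTree (V : Type*) where
  | leaf : RConfig V → DTree V
  | node : RConfig V → List (DTree V) → DTree V

namespace DTree

variable {V : Type*}

/-- The configuration at the root of a derivation tree. -/
def root : DTree V → RConfig V
  | DTree.leaf s => s
  | DTree.node s _ => s

/-- `Mem s t`: the configuration `s` appears (as some node) in the tree `t`. -/
inductive Mem : RConfig V → DTree V → Prop
  | leaf (s : RConfig V) : Mem s (DTree.leaf s)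
  | root (s : RConfig V) (ts : List (DTree V)) : Mem s (DTree.node s ts)
  | child {s s' : RConfig V} {t : DTree V} {ts : List (DTree V)}
      (h : Mem s t) (ht : t ∈ ts) : Mem s (DTree.node s' ts)

/-- `LeafMem s t`: the configuration `s` appears as a leaf of the tree `t`. -/
inductive LeafMem : RConfig V → DTree V → Prop
  | leaf (s : RConfig V) : LeafMem s (DTree.leaf s)
  | child {s s' : RConfig V} {t : DTree V} {ts : List (DTree V)}
      (h : LeafMem s t) (ht : t ∈ ts) : LeafMem s (DTree.node s' ts)

/-- `Sub t t'`: `t` is a subtree of `t'`. -/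
inductive Sub : DTree V → DTree V → Prop
  | refl (t : DTree V) : Sub t t
  | child {t t' : DTree V} {s : RConfig V} {ts : List (DTree V)}
      (h : Sub t t') (ht : t' ∈ ts) : Sub t (DTree.node s ts)

end DTree

/-- `Expand D D'`: `D'` is obtained from `D` by applying exactly one derivation
rule to one of the leaves of `D`. -/
inductive Expand {V : Type*} [Fintype V] [DecidableEq V] : DTree V → DTree V → Prop
  | here {c : Config V} {ts : List (RConfig V)} (h : Step c ts) :
      Expand (DTree.leaf (RConfig.node c)) (DTree.node (RConfig.node c) (ts.map DTree.leaf))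
  | child {s : RConfig V} {pre post : List (DTree V)} {t t' : DTree V}
      (h : Expand t t') :
      Expand (DTree.node s (pre ++ t :: post)) (DTree.node s (pre ++ t' :: post))

/-- `IsDerivation s0 m D`: `D 0, D 1, …, D m` is a Reluplex derivation starting
from the derivation tree consisting of the single node `s0`. -/
def IsDerivation {V : Type*} [Fintype V] [DecidableEq V]
    (s0 : Config V) (m : ℕ) (D : ℕ → DTree V) : Prop :=
  D 0 = DTree.leaf (RConfig.node s0) ∧ ∀ i < m, Expand (D i) (D (i + 1))

/-- The relation symbol of a linear atom: `=`, `≤` or `≥`. -/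
inductive LinRel where
  | eq : LinRel
  | le : LinRel
  | ge : LinRel

/-- A linear atom `Σ_j coeff j * x_j ⋈ d` over the variables `Fin n`. -/
structure LinAtom (n : ℕ) where
  coeff : Fin n → ℝ
  rel : LinRel
  d : ℝ

/-- The assignment `β` satisfies the linear atom `a`. -/
def LinAtom.Holds {n : ℕ} (a : LinAtom n) (β : Fin n → ℝ) : Prop :=
  match a.rel with
  | LinRel.eq => ∑ j, a.coeff j * β j = a.d
  | LinRel.le => ∑ j, a.coeff j * β j ≤ a.d
  | LinRel.ge => a.d ≤ ∑ j, a.coeff j * β j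

/-- A conjunction `φ` of linear atoms and ReLU atoms `ReLU(x, y)` over the
variables `Fin n`. -/
structure Phi (n : ℕ) where
  lin : List (LinAtom n)
  relu : Finset (Fin n × Fin n)

/-- The assignment `β` satisfies every atom of `φ`. -/
def Phi.Sat {n : ℕ} (φ : Phi n) (β : Fin n → ℝ) : Prop :=
  (∀ a ∈ φ.lin, a.Holds β) ∧ ∀ p ∈ φ.relu, β p.2 = max 0 (β p.1)

/-- `φ` is satisfiable: some real assignment satisfies every atom of `φ`. -/
def Phi.Satisfiable {n : ℕ} (φ : Phi n) : Prop :=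
  ∃ β : Fin n → ℝ, φ.Sat β

/-- The initial configuration of `φ`: for the `a`-th linear atom a fresh basic
variable `Sum.inr a` is introduced, with tableau row `Σ_j coeff j * x_j` and with
`d` as its corresponding bound(s); all original variables `Sum.inl j` are
non-basic and unbounded, except that forward-facing ReLU variables get lower
bound `0`; the assignment is identically `0`; and `R` consists of the ReLU atoms. -/
noncomputable def Phi.init {n : ℕ} (φ : Phi n) :
    Config (Fin n ⊕ Fin φ.lin.length) :=
  { basic := Finset.univ.filter (fun v => v.isRight)
    T := fun r k =>
      match r, k with
      | Sum.inr a, Sum.inl j => (φ.lin.get a).coeff j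
      | _, _ => 0
    l := fun v =>
      match v with
      | Sum.inl j => if ∃ x, (x, j) ∈ φ.relu then (0 : EReal) else ⊥
      | Sum.inr a =>
        match (φ.lin.get a).rel with
        | LinRel.eq => ((φ.lin.get a).d : EReal)
        | LinRel.ge => ((φ.lin.get a).d : EReal)
        | LinRel.le => ⊥
    u := fun v =>
      match v with
      | Sum.inl _ => ⊤
      | Sum.inr a =>
        match (φ.lin.get a).rel with
        | LinRel.eq => ((φ.lin.get a).d : EReal)
        | LinRel.le => ((φ.lin.get a).d : EReal)
        | LinRel.ge => ⊤
    α := fun _ => 0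
    R := φ.relu.image (fun p => (Sum.inl p.1, Sum.inl p.2)) }

/-!
Every rule either pivots, replacing the tableau by an equivalent system, updates a non-basic
variable while moving the basic ones along the tableau, or tightens bounds. Hence along a
derivation every solution of a configuration (an assignment satisfying its tableau, bounds and
ReLU pairs) is a solution of the initial configuration, and the current assignment always
satisfies the current tableau. `ReluSuccess` fires only when that assignment also meets the bounds
and ReLU pairs, so it solves the initial configuration of `φ`. Solutions of the latter restrict
to models of `φ`: the slack variable of each linear atom equals its left-hand side and is bounded
according to the atom's relation.
-/

lemma ite_le_of_le {ι α : Type*} [DecidableEq ι] [Preorder α] {f : ι → α} {i : ι} {v : α}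
    (h : v ≤ f i) (x : ι) : (if x = i then v else f x) ≤ f x := by
  split_ifs with hx
  · exact hx ▸ h
  · exact le_rfl

lemma le_ite_of_le {ι α : Type*} [DecidableEq ι] [Preorder α] {f : ι → α} {i : ι} {v : α}
    (h : f i ≤ v) (x : ι) : f x ≤ (if x = i then v else f x) := by
  split_ifs with hx
  · exact hx ▸ h
  · exact le_rfl

lemma List.eq_or_mem_append_cons {α : Type*} {pre post : List α} {a b x : α}
    (hx : x ∈ pre ++ b :: post) : x = b ∨ x ∈ pre ++ a :: post := by
  simp only [List.mem_append, List.mem_cons] at hx ⊢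
  tauto

namespace Config

open Finset

variable {V : Type*} [Fintype V] [DecidableEq V]

def nonbasic (c : Config V) : Finset V :=
  univ.filter (fun j => j ∉ c.basic)

@[simp]
lemma mem_nonbasic {c : Config V} {j : V} : j ∈ c.nonbasic ↔ j ∉ c.basic := by
  simp [nonbasic]

def IsSolution (c : Config V) (β : V → ℝ) : Prop :=
  c.SatTab β ∧ c.InBounds β ∧ ∀ p ∈ c.R, β p.2 = max 0 (β p.1)

lemma rowSum_eq_add_sum_erase (c : Config V) {j : V} (hj : j ∉ c.basic) (r : V) (β : V → ℝ) :
    c.rowSum r β = c.T r j * β j + ∑ k ∈ c.nonbasic.erase j, c.T r k * β k :=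
  (add_sum_erase _ _ (mem_nonbasic.2 hj)).symm

section Pivot

variable {c : Config V} {i j : V}

lemma nonbasic_pivotConfig (hi : i ∈ c.basic) (hj : j ∉ c.basic) :
    (c.pivotConfig i j).nonbasic = insert i (c.nonbasic.erase j) := by
  have hij : i ≠ j := by rintro rfl; exact hj hi
  ext k
  by_cases hk : k = i <;> simp [pivotConfig, nonbasic, hk, hi, hij]

lemma rowSum_pivotConfig (hi : i ∈ c.basic) (hj : j ∉ c.basic) (r : V) (β : V → ℝ) :
    (c.pivotConfig i j).rowSum r β =
      (c.pivotConfig i j).T r i * β i +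
        ∑ k ∈ c.nonbasic.erase j, (c.pivotConfig i j).T r k * β k := by
  have hi' : i ∉ c.nonbasic.erase j := by simp [hi]
  rw [rowSum, ← nonbasic, nonbasic_pivotConfig hi hj, sum_insert hi']

lemma residual_pivotConfig_entering (hi : i ∈ c.basic) (hj : j ∉ c.basic) (hT : c.T i j ≠ 0)
    (β : V → ℝ) :
    β j - (c.pivotConfig i j).rowSum j β = -(β i - c.rowSum i β) / c.T i j := by
  rw [rowSum_pivotConfig hi hj, c.rowSum_eq_add_sum_erase hj]
  have hsum : ∑ k ∈ c.nonbasic.erase j, (c.pivotConfig i j).T j k * β k =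
      -(∑ k ∈ c.nonbasic.erase j, c.T i k * β k) / c.T i j := by
    rw [neg_div, sum_div, ← sum_neg_distrib]
    refine sum_congr rfl fun k hk => ?_
    have hki : k ≠ i := by rintro rfl; simp [hi] at hk
    simp only [pivotConfig, if_true, hki, if_false]
    ring
  rw [hsum]
  simp only [pivotConfig, if_true]
  field_simp
  ring

lemma residual_pivotConfig_of_ne (hi : i ∈ c.basic) (hj : j ∉ c.basic) (hT : c.T i j ≠ 0)
    {r : V} (hr : r ∈ c.basic) (hri : r ≠ i) (β : V → ℝ) :
    β r - (c.pivotConfig i j).rowSum r β =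
      (β r - c.rowSum r β) - c.T r j / c.T i j * (β i - c.rowSum i β) := by
  have hrj : r ≠ j := by rintro rfl; exact hj hr
  rw [rowSum_pivotConfig hi hj, c.rowSum_eq_add_sum_erase hj r, c.rowSum_eq_add_sum_erase hj i]
  have hsum : ∑ k ∈ c.nonbasic.erase j, (c.pivotConfig i j).T r k * β k =
      ∑ k ∈ c.nonbasic.erase j, c.T r k * β k -
        c.T r j / c.T i j * ∑ k ∈ c.nonbasic.erase j, c.T i k * β k := by
    rw [mul_sum, ← sum_sub_distrib]
    refine sum_congr rfl fun k hk => ?_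
    have hki : k ≠ i := by rintro rfl; simp [hi] at hk
    simp only [pivotConfig, hrj, hki, if_false]
    ring
  rw [hsum]
  simp only [pivotConfig, hrj, if_true, if_false]
  field_simp
  ring

lemma satTab_pivotConfig_iff (hi : i ∈ c.basic) (hj : j ∉ c.basic) (hT : c.T i j ≠ 0)
    (β : V → ℝ) : (c.pivotConfig i j).SatTab β ↔ c.SatTab β := by
  have hentering := residual_pivotConfig_entering hi hj hT β
  have hother := fun {r} => residual_pivotConfig_of_ne hi hj hT (r := r) (β := β)
  simp only [SatTab, ← sub_eq_zero (a := β _)]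
  constructor
  · intro h
    have hrow_i : β i - c.rowSum i β = 0 := by
      have hrow_j := h j (by simp [pivotConfig])
      rwa [hentering, div_eq_zero_iff, neg_eq_zero, or_iff_left hT] at hrow_j
    intro r hr
    by_cases hri : r = i
    · rwa [hri]
    · simpa [hother hr hri, hrow_i] using h r (by simp [pivotConfig, hri, hr])
  · intro h r hr
    rcases mem_insert.1 hr with rfl | hr
    · simp [hentering, h i hi]
    · obtain ⟨hri, hr⟩ := mem_erase.1 hr
      simp [hother hr hri, h r hr, h i hi]

lemma isSolution_pivotConfig_iff (hi : i ∈ c.basic) (hj : j ∉ c.basic) (hT : c.T i j ≠ 0)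
    (β : V → ℝ) : (c.pivotConfig i j).IsSolution β ↔ c.IsSolution β :=
  and_congr_left' (satTab_pivotConfig_iff hi hj hT β)

end Pivot

section Update

variable {c : Config V} {j : V}

lemma rowSum_updateConfig_α (hj : j ∉ c.basic) (δ : ℝ) (r : V) :
    c.rowSum r (c.updateConfig j δ).α = c.rowSum r c.α + c.T r j * δ := by
  have hα : ∀ k ∈ c.nonbasic,
      (c.updateConfig j δ).α k = c.α k + if k = j then δ else 0 := by
    intro k hk
    by_cases hkj : k = j <;> simp_all [updateConfig]
  rw [rowSum, ← nonbasic, sum_congr rfl fun k hk => by rw [hα k hk], rowSum, ← nonbasic]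
  simp [mul_add, sum_add_distrib, hj]

lemma satTab_updateConfig (hj : j ∉ c.basic) (δ : ℝ) (h : c.SatTab c.α) :
    (c.updateConfig j δ).SatTab (c.updateConfig j δ).α := by
  intro r (hr : r ∈ c.basic)
  have hrj : r ≠ j := by rintro rfl; exact hj hr
  change _ = c.rowSum r _
  rw [rowSum_updateConfig_α hj, ← h r hr]
  simp [updateConfig, hrj, hr, mul_comm]

end Update

structure Tightens (c' c : Config V) : Prop where
  basic_eq : c'.basic = c.basic
  T_eq : c'.T = c.T
  α_eq : c'.α = c.α
  R_eq : c'.R = c.R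
  l_le : ∀ x, c.l x ≤ c'.l x
  u_le : ∀ x, c'.u x ≤ c.u x

namespace Tightens

variable {c c' : Config V}

lemma satTab_iff (h : c'.Tightens c) (β : V → ℝ) : c'.SatTab β ↔ c.SatTab β := by
  simp only [SatTab, rowSum, h.basic_eq, h.T_eq]

lemma isSolution (h : c'.Tightens c) {β : V → ℝ} (hβ : c'.IsSolution β) : c.IsSolution β :=
  ⟨(h.satTab_iff β).1 hβ.1,
    fun x => ⟨(h.l_le x).trans (hβ.2.1 x).1, (hβ.2.1 x).2.trans (h.u_le x)⟩,
    h.R_eq ▸ hβ.2.2⟩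

end Tightens

end Config

open Config

section Step

variable {V : Type*} [Fintype V] [DecidableEq V] {c c' : Config V} {ts : List (RConfig V)}

lemma Step.child_cases (h : Step c ts) (hc' : RConfig.node c' ∈ ts) :
    (∃ i j, i ∈ c.basic ∧ j ∉ c.basic ∧ c.T i j ≠ 0 ∧ c' = c.pivotConfig i j) ∨
    (∃ j δ, j ∉ c.basic ∧ c' = c.updateConfig j δ) ∨
    c'.Tightens c := by
  cases h <;> simp only [List.mem_cons, List.not_mem_nil, or_false, RConfig.node.injEq,
    reduceCtorEq] at hc'
  case pivot1 i j hi _ hj =>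
    refine Or.inl ⟨i, j, hi, hj.1, ?_, hc'⟩
    rcases hj.2 with ⟨hT, -⟩ | ⟨hT, -⟩
    exacts [hT.ne', hT.ne]
  case pivot2 i j hi _ hj =>
    refine Or.inl ⟨i, j, hi, hj.1, ?_, hc'⟩
    rcases hj.2 with ⟨hT, -⟩ | ⟨hT, -⟩
    exacts [hT.ne, hT.ne']
  case pivotForRelu i j hi _ hjb hT => exact Or.inl ⟨i, j, hi, hjb, hT, hc'⟩
  case update j δ hjb _ _ _ => exact Or.inr (Or.inl ⟨j, δ, hjb, hc'⟩)
  case updateB i j _ hib _ _ => exact Or.inr (Or.inl ⟨i, _, hib, hc'⟩)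
  case updateF i j _ hjb _ => exact Or.inr (Or.inl ⟨j, _, hjb, hc'⟩)
  case reluSplit i j _ hl hu =>
    rcases hc' with rfl | rfl
    · exact Or.inr (Or.inr ⟨rfl, rfl, rfl, rfl, fun _ => le_rfl, ite_le_of_le hu.le⟩)
    · exact Or.inr (Or.inr ⟨rfl, rfl, rfl, rfl, le_ite_of_le hl.le, fun _ => le_rfl⟩)
  case deriveLowerBound i _ hlt =>
    subst hc'
    exact Or.inr (Or.inr ⟨rfl, rfl, rfl, rfl, le_ite_of_le hlt.le, fun _ => le_rfl⟩)
  case deriveUpperBound i _ hlt =>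
    subst hc'
    exact Or.inr (Or.inr ⟨rfl, rfl, rfl, rfl, fun _ => le_rfl, ite_le_of_le hlt.le⟩)

lemma Step.isSolution_of_mem (h : Step c ts) (hc' : RConfig.node c' ∈ ts) {β : V → ℝ}
    (hβ : c'.IsSolution β) : c.IsSolution β := by
  rcases h.child_cases hc' with ⟨i, j, hi, hj, hT, rfl⟩ | ⟨j, δ, -, rfl⟩ | htight
  · exact (isSolution_pivotConfig_iff hi hj hT β).1 hβ
  · exact hβ
  · exact htight.isSolution hβ

lemma Step.satTab_of_mem (h : Step c ts) (hc' : RConfig.node c' ∈ ts) (hα : c.SatTab c.α) :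
    c'.SatTab c'.α := by
  rcases h.child_cases hc' with ⟨i, j, hi, hj, hT, rfl⟩ | ⟨j, δ, hj, rfl⟩ | htight
  · exact (satTab_pivotConfig_iff hi hj hT c.α).2 hα
  · exact satTab_updateConfig hj δ hα
  · rw [htight.satTab_iff, htight.α_eq]
    exact hα

lemma Step.isSolution_of_SAT_mem (h : Step c ts) (hSAT : RConfig.SAT ∈ ts)
    (hα : c.SatTab c.α) : c.IsSolution c.α := by
  cases h with
  | reluSuccess hb hr => exact ⟨hα, hb, hr⟩
  | _ => simp at hSAT

def StepsTo (c c' : Config V) : Prop :=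
  ∃ ts, Step c ts ∧ RConfig.node c' ∈ ts

variable {c₀ : Config V}

lemma Config.IsSolution.of_reflTransGen (hc : Relation.ReflTransGen StepsTo c₀ c)
    {β : V → ℝ} (hβ : c.IsSolution β) : c₀.IsSolution β := by
  induction hc with
  | refl => exact hβ
  | tail _ hstep ih =>
    obtain ⟨ts, hts, hmem⟩ := hstep
    exact ih (hts.isSolution_of_mem hmem hβ)

lemma Config.SatTab.of_reflTransGen (hc : Relation.ReflTransGen StepsTo c₀ c)
    (hα : c₀.SatTab c₀.α) : c.SatTab c.α := by
  induction hc with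
  | refl => exact hα
  | tail _ hstep ih =>
    obtain ⟨ts, hts, hmem⟩ := hstep
    exact hts.satTab_of_mem hmem ih

end Step

namespace DTree

variable {V : Type*}

lemma Sub.mem_root {t t' : DTree V} (h : Sub t t') : Mem t.root t' := by
  induction h with
  | refl => cases t <;> constructor
  | child _ ht ih => exact .child ih ht

lemma LeafMem.exists_parent {s : RConfig V} {t : DTree V} (h : LeafMem s t) (hroot : t.root ≠ s) :
    ∃ s' ss, Sub (node s' ss) t ∧ ∃ t' ∈ ss, t'.root = s := by
  induction h with
  | leaf => exact absurd rfl hroot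
  | @child s' t ts _ ht ih =>
    by_cases hts : t.root = s
    · exact ⟨s', ts, .refl _, t, ht, hts⟩
    · obtain ⟨s'', ss, hsub, hss⟩ := ih hts
      exact ⟨s'', ss, .child hsub ht, hss⟩

variable [Fintype V] [DecidableEq V]

structure IsDerivedFrom (c₀ : Config V) (t : DTree V) : Prop where
  root_eq : t.root = .node c₀
  reachable : ∀ c, Mem (.node c) t → Relation.ReflTransGen StepsTo c₀ c
  step : ∀ s ss, Sub (node s ss) t → ∃ c, s = .node c ∧ Step c (ss.map root)

end DTree

namespace Expand

open DTree

variable {V : Type*} [Fintype V] [DecidableEq V] {t t' : DTree V}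

lemma root_eq (h : Expand t t') : t'.root = t.root := by
  cases h <;> rfl

lemma reachable {c₀ : Config V} (h : Expand t t')
    (ht : ∀ c, Mem (.node c) t → Relation.ReflTransGen StepsTo c₀ c) :
    ∀ c, Mem (.node c) t' → Relation.ReflTransGen StepsTo c₀ c := by
  induction h with
  | @here c ts hstep =>
    intro c' hc'
    cases hc' with
    | root => exact ht c (.leaf _)
    | child hc' hmem =>
      obtain ⟨s, hs, rfl⟩ := List.mem_map.1 hmem
      cases hc'
      exact (ht c (.leaf _)).tail ⟨ts, hstep, hs⟩
  | @child s pre post t t' _ ih =>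
    intro c' hc'
    cases hc' with
    | root => exact ht c' (.root _ _)
    | child hc' hmem =>
      rcases List.eq_or_mem_append_cons hmem with rfl | hmem
      · exact ih (fun c hc => ht c (.child hc (by simp))) c' hc'
      · exact ht c' (.child hc' hmem)

lemma step (h : Expand t t')
    (ht : ∀ s ss, Sub (node s ss) t → ∃ c, s = .node c ∧ Step c (ss.map root)) :
    ∀ s ss, Sub (node s ss) t' → ∃ c, s = .node c ∧ Step c (ss.map root) := by
  induction h with
  | @here c ts hstep =>
    intro s ss hsub
    cases hsub with
    | refl => exact ⟨c, rfl, by simpa [Function.comp_def, root] using hstep⟩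
    | child hsub hmem =>
      obtain ⟨s, -, rfl⟩ := List.mem_map.1 hmem
      cases hsub
  | @child s pre post t t' hexp ih =>
    intro s' ss hsub
    cases hsub with
    | refl => simpa [hexp.root_eq] using ht s _ (.refl _)
    | child hsub hmem =>
      rcases List.eq_or_mem_append_cons hmem with rfl | hmem
      · exact ih (fun s ss hsub => ht s ss (.child hsub (by simp))) s' ss hsub
      · exact ht s' ss (.child hsub hmem)

lemma isDerivedFrom {c₀ : Config V} (h : Expand t t') (ht : t.IsDerivedFrom c₀) :
    t'.IsDerivedFrom c₀ :=
  ⟨h.root_eq.trans ht.root_eq, h.reachable ht.reachable, h.step ht.step⟩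

end Expand

namespace DTree.IsDerivedFrom

variable {V : Type*} [Fintype V] [DecidableEq V] {c₀ c : Config V} {t : DTree V}

lemma leaf (c₀ : Config V) : (leaf (.node c₀)).IsDerivedFrom c₀ where
  root_eq := rfl
  reachable c hc := by cases hc; rfl
  step s ss hsub := by cases hsub

lemma isSolution_of_sub (ht : t.IsDerivedFrom c₀) (hα : c₀.SatTab c₀.α)
    {ss : List (DTree V)} (hsub : Sub (node (.node c) ss) t)
    (hSAT : ∃ t' ∈ ss, t'.root = .SAT) : c₀.IsSolution c.α := by
  obtain ⟨c', hc', hstep⟩ := ht.step _ ss hsub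
  cases hc'
  have hreach := ht.reachable c hsub.mem_root
  have hSAT_mem : RConfig.SAT ∈ ss.map root := List.mem_map.2 hSAT
  exact (hstep.isSolution_of_SAT_mem hSAT_mem (hα.of_reflTransGen hreach)).of_reflTransGen hreach

end DTree.IsDerivedFrom

lemma IsDerivation.isDerivedFrom {V : Type*} [Fintype V] [DecidableEq V] {c₀ : Config V}
    {m : ℕ} {D : ℕ → DTree V} (hD : IsDerivation c₀ m D) {i : ℕ} (hi : i ≤ m) :
    (D i).IsDerivedFrom c₀ := by
  induction i with
  | zero => exact hD.1 ▸ .leaf c₀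
  | succ k ih => exact (hD.2 k hi).isDerivedFrom (ih (Nat.le_of_succ_le hi))

namespace Phi

variable {n : ℕ} (φ : Phi n)

lemma satTab_init_α : φ.init.SatTab φ.init.α := by
  simp [Config.SatTab, Config.rowSum, init]

lemma rowSum_init (a : Fin φ.lin.length) (β : Fin n ⊕ Fin φ.lin.length → ℝ) :
    φ.init.rowSum (.inr a) β = ∑ j, (φ.lin.get a).coeff j * β (.inl j) := by
  rw [Config.rowSum, Finset.sum_filter, Fintype.sum_sum_type]
  simp [init]

variable {φ} {β : Fin n ⊕ Fin φ.lin.length → ℝ}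

lemma holds_of_isSolution_init (h : φ.init.IsSolution β) (a : Fin φ.lin.length) :
    (φ.lin.get a).Holds (fun j => β (.inl j)) := by
  have hrow : β (.inr a) = ∑ j, (φ.lin.get a).coeff j * β (.inl j) := by
    rw [h.1 (.inr a) (by simp [init]), rowSum_init]
  obtain ⟨hl, hu⟩ := h.2.1 (.inr a)
  unfold LinAtom.Holds
  rw [← hrow]
  cases hrel : (φ.lin.get a).rel <;> simp only [init, hrel] at hl hu <;> norm_cast at hl hu ⊢
  exact le_antisymm hu hl

lemma sat_of_isSolution_init (h : φ.init.IsSolution β) : φ.Sat (fun j => β (.inl j)) := by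
  refine ⟨fun a ha => ?_, fun p hp => h.2.2 _ (Finset.mem_image_of_mem _ hp)⟩
  obtain ⟨a, rfl⟩ := List.mem_iff_get.1 ha
  exact holds_of_isSolution_init h a

end Phi

/-- soundness of Reluplex, satisfiable case. If there is a witness
from `φ` — a derivation from the initial configuration of `φ` ending in a tree with
at least one `SAT` leaf — then `φ` is satisfiable; moreover the assignment `α` of any
node to which the `ReluSuccess` rule was applied (i.e., any node with a `SAT` child
in some tree of the derivation), restricted to the original variables, satisfies
every atom of `φ`. -/
theorem reluplex_sound_sat {n : ℕ} (φ : Phi n)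
    (m : ℕ) (D : ℕ → DTree (Fin n ⊕ Fin φ.lin.length))
    (hD : IsDerivation φ.init m D)
    (hwit : DTree.LeafMem RConfig.SAT (D m)) :
    φ.Satisfiable ∧
      ∀ i ≤ m, ∀ (c : Config (Fin n ⊕ Fin φ.lin.length))
        (ts : List (DTree (Fin n ⊕ Fin φ.lin.length))),
        DTree.Sub (DTree.node (RConfig.node c) ts) (D i) →
        (∃ t ∈ ts, t.root = RConfig.SAT) →
        φ.Sat (fun j => c.α (Sum.inl j)) := by
  have hsuccess : ∀ i ≤ m, ∀ c ts, DTree.Sub (DTree.node (RConfig.node c) ts) (D i) →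
      (∃ t ∈ ts, t.root = RConfig.SAT) → φ.Sat (fun j => c.α (Sum.inl j)) :=
    fun i hi c ts hsub hSAT => Phi.sat_of_isSolution_init
      ((hD.isDerivedFrom hi).isSolution_of_sub φ.satTab_init_α hsub hSAT)
  refine ⟨?_, hsuccess⟩
  have hDm := hD.isDerivedFrom le_rfl
  obtain ⟨s, ts, hsub, hSAT⟩ := hwit.exists_parent (by simp [hDm.root_eq])
  obtain ⟨c, rfl, -⟩ := hDm.step s ts hsub
  exact ⟨_, hsuccess m le_rfl c ts hsub hSAT⟩
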